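/- Let N be a 3-dimensional nil evolution algebra over a field F of characteristic ≠ 2 which is associative and indecomposable. Then N admits a natural basis (v_1, v_2, v_3) and there exists α ∈ F, α ≠ 0, such that v_1·v_1 = v_3, v_2·v_2 = α·v_3, v_3·v_3 = 0 (the algebra N_{3,3}(α)). -/

import Mathlib

/-! In a natural basis `x y = ∑ₜ xₜ yₜ eₜ²`. Nilpotency of `eᵢ` kills the `eᵢ`-coordinate of `eᵢ²`,
and associativity, `eᵢ² eⱼ = eᵢ (eᵢ eⱼ) = 0`, kills its `eⱼ`-coordinate whenever `eⱼ² ≠ 0`. So some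
`eₖ² = 0`, and all squares lie in the span of the basis vectors of zero square. If two squares
vanish, all products are multiples of the third square `eᵢ²`, and a basis vector `u` with `u² = 0`
splits off as `A = ker φ ⊕ F u` for a functional `φ` vanishing on `eᵢ`, `eᵢ²` but not on `u`.
Otherwise `eᵢ² = c eₖ` and `eⱼ² = d eₖ` with `c, d ≠ 0`, and rescaling `eₖ` by `c` gives
`N_{3,3}(d / c)`. -/

/-- Principal powers: `ppow m a k = a^(k+1)`. -/
def ppow {F A : Type*} [Field F] [AddCommGroup A] [Module F A]
    (m : A →ₗ[F] A →ₗ[F] A) (a : A) : ℕ → A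
  | 0 => a
  | k + 1 => m (ppow m a k) a

def IsNaturalBasis {ι F A : Type*} [Field F] [AddCommGroup A] [Module F A]
    (m : A →ₗ[F] A →ₗ[F] A) (e : Module.Basis ι F A) : Prop :=
  ∀ i j, i ≠ j → m (e i) (e j) = 0

def IsDecomposable {F A : Type*} [Field F] [AddCommGroup A] [Module F A]
    (m : A →ₗ[F] A →ₗ[F] A) : Prop :=
  ∃ I J : Submodule F A,
    (∀ x ∈ I, ∀ y : A, m x y ∈ I) ∧ (∀ x ∈ J, ∀ y : A, m x y ∈ J) ∧
    I ≠ ⊥ ∧ J ≠ ⊥ ∧ IsCompl I J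

-- `A ≅ N_{3,3}(α)` for some `α ≠ 0`
def HasN33Basis {F A : Type*} [Field F] [AddCommGroup A] [Module F A]
    (m : A →ₗ[F] A →ₗ[F] A) : Prop :=
  ∃ v : Module.Basis (Fin 3) F A,
    IsNaturalBasis m v ∧
    ∃ α : F, α ≠ 0 ∧ m (v 0) (v 0) = v 2 ∧ m (v 1) (v 1) = α • v 2 ∧ m (v 2) (v 2) = 0

section

variable {F A : Type*} [Field F] [AddCommGroup A] [Module F A]

theorem isDecomposable_of_dual {m : A →ₗ[F] A →ₗ[F] A} {u x : A} (hu : m u = 0)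
    {φ : Module.Dual F A} (hφm : m.compr₂ φ = 0) (hφu : φ u ≠ 0) (hx : x ≠ 0)
    (hφx : φ x = 0) : IsDecomposable m := by
  refine ⟨LinearMap.ker φ, F ∙ u, fun x _ y => LinearMap.congr_fun₂ hφm x y, fun x hx y => ?_,
    (Submodule.ne_bot_iff _).2 ⟨x, hφx, hx⟩,
    Submodule.span_singleton_eq_bot.not.2 fun h => hφu (by simp [h]), ?_⟩
  · obtain ⟨c, rfl⟩ := Submodule.mem_span_singleton.mp hx
    simp [hu]
  · exact Submodule.isCompl_span_singleton_of_isCoatom_of_notMem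
      (LinearMap.isCoatom_ker_of_surjective (φ.surjective_of_ne_zero fun h => hφu (by simp [h])))
      hφu

section NaturalBasis

variable {ι : Type*} {m : A →ₗ[F] A →ₗ[F] A} {e : Module.Basis ι F A}

theorem mul_basis_eq_repr_smul_sq (hnat : IsNaturalBasis m e) (x : A) (j : ι) :
    m x (e j) = e.repr x j • m (e j) (e j) := by
  have : m.flip (e j) = (e.coord j).smulRight (m (e j) (e j)) := e.ext fun i => by
    rcases eq_or_ne i j with rfl | hij
    · simp
    · simp [hnat i j hij, hij]
  exact LinearMap.congr_fun this x

theorem basis_mul_eq_zero (hnat : IsNaturalBasis m e) {j : ι}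
    (hj : m (e j) (e j) = 0) : m (e j) = 0 :=
  e.ext fun t => by
    rcases eq_or_ne j t with rfl | hjt
    · exact hj
    · exact hnat j t hjt

theorem compr₂_eq_zero_of_apply_sq_eq_zero (hnat : IsNaturalBasis m e)
    {φ : Module.Dual F A} (hφ : ∀ t, φ (m (e t) (e t)) = 0) : m.compr₂ φ = 0 :=
  LinearMap.ext_basis e e fun s t => by
    rcases eq_or_ne s t with rfl | hst
    · exact hφ s
    · simp [hnat s t hst]

theorem ppow_basis_succ (hnat : IsNaturalBasis m e) (i : ι) (k : ℕ) :
    ppow m (e i) (k + 1) = e.repr (m (e i) (e i)) i ^ k • m (e i) (e i) := by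
  induction k with
  | zero => simp [ppow]
  | succ k ih =>
    rw [ppow, ih, map_smul, LinearMap.smul_apply,
      mul_basis_eq_repr_smul_sq hnat (m (e i) (e i)), smul_smul, pow_succ]

theorem repr_sq_self_eq_zero (hnat : IsNaturalBasis m e) {i : ι}
    (hnil : ∃ k, ppow m (e i) k = 0) : e.repr (m (e i) (e i)) i = 0 := by
  obtain ⟨_ | k, hk⟩ := hnil
  · exact absurd hk (e.ne_zero i)
  rw [ppow_basis_succ hnat] at hk
  rcases smul_eq_zero.mp hk with h | h
  · exact pow_eq_zero_iff'.mp h |>.1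
  · simp [h]

theorem repr_sq_smul_sq_eq_zero (hnat : IsNaturalBasis m e)
    (hassoc : ∀ x y z : A, m (m x y) z = m x (m y z)) {i j : ι} (hij : i ≠ j) :
    e.repr (m (e i) (e i)) j • m (e j) (e j) = 0 := by
  rw [← mul_basis_eq_repr_smul_sq hnat, hassoc, hnat i j hij, map_zero]

theorem repr_sq_eq_zero_of_sq_ne_zero (hnat : IsNaturalBasis m e)
    (hnil : ∀ a : A, ∃ k, ppow m a k = 0) (hassoc : ∀ x y z : A, m (m x y) z = m x (m y z))
    (i : ι) {j : ι} (hj : m (e j) (e j) ≠ 0) : e.repr (m (e i) (e i)) j = 0 := by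
  rcases eq_or_ne i j with rfl | hij
  · exact repr_sq_self_eq_zero hnat (hnil (e i))
  · exact (smul_eq_zero.mp (repr_sq_smul_sq_eq_zero hnat hassoc hij)).resolve_right hj

theorem exists_sq_eq_zero [Nonempty ι] (hnat : IsNaturalBasis m e)
    (hnil : ∀ a : A, ∃ k, ppow m a k = 0) (hassoc : ∀ x y z : A, m (m x y) z = m x (m y z)) :
    ∃ k, m (e k) (e k) = 0 := by
  by_contra! hsq
  obtain ⟨i⟩ := ‹Nonempty ι›
  refine hsq i (e.repr.map_eq_zero_iff.mp ?_)
  ext t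
  exact repr_sq_eq_zero_of_sq_ne_zero hnat hnil hassoc i (hsq t)

theorem isDecomposable_of_forall_ne_sq_eq_zero (hnat : IsNaturalBasis m e)
    {i j k : ι} (hij : i ≠ j) (hik : i ≠ k) (hjk : j ≠ k)
    (hsq : ∀ t, t ≠ i → m (e t) (e t) = 0) : IsDecomposable m := by
  set a := e.repr (m (e i) (e i)) j
  set b := e.repr (m (e i) (e i)) k
  have hφ {φ : Module.Dual F A} (h : φ (m (e i) (e i)) = 0) : m.compr₂ φ = 0 :=
    compr₂_eq_zero_of_apply_sq_eq_zero hnat fun t => by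
      rcases eq_or_ne t i with rfl | hti
      · exact h
      · rw [hsq t hti, map_zero]
  by_cases ha : a = 0
  · refine isDecomposable_of_dual (basis_mul_eq_zero hnat (hsq j hij.symm))
      (φ := e.coord j) (hφ ha) ?_ (e.ne_zero i) ?_ <;> simp [hij]
  · refine isDecomposable_of_dual (basis_mul_eq_zero hnat (hsq k hik.symm))
      (φ := a • e.coord k - b • e.coord j) (hφ ?_) ?_ (e.ne_zero i) ?_
    · simp [a, b, mul_comm]
    · simpa [hjk] using ha
    · simp [hij, hik]

end NaturalBasis

section Dim3

variable {m : A →ₗ[F] A →ₗ[F] A} {e : Module.Basis (Fin 3) F A}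

theorem hasN33Basis_of_sq_eq_smul (hnat : IsNaturalBasis m e)
    {c d : F} (hc : c ≠ 0) (hd : d ≠ 0) (h0 : m (e 0) (e 0) = c • e 2)
    (h1 : m (e 1) (e 1) = d • e 2) (h2 : m (e 2) (e 2) = 0) :
    HasN33Basis m := by
  set v := e.unitsSMul ![1, 1, Units.mk0 c hc]
  have hv0 : v 0 = e 0 := by simp [v, Module.Basis.unitsSMul_apply]
  have hv1 : v 1 = e 1 := by simp [v, Module.Basis.unitsSMul_apply]
  have hv2 : v 2 = c • e 2 := by simp [v, Module.Basis.unitsSMul_apply]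
  refine ⟨v, fun i j hij => ?_, d * c⁻¹, by simp [hc, hd], ?_, ?_, ?_⟩
  · simp [v, Module.Basis.unitsSMul_apply, hnat i j hij]
  · rw [hv0, hv2, h0]
  · rw [hv1, hv2, h1, smul_smul, mul_assoc, inv_mul_cancel₀ hc, mul_one]
  · simp [hv2, h2]

theorem hasN33Basis_of_sq_two_eq_zero (hnat : IsNaturalBasis m e)
    (hnil : ∀ a : A, ∃ k, ppow m a k = 0) (hassoc : ∀ x y z : A, m (m x y) z = m x (m y z))
    (hindec : ¬ IsDecomposable m) (h2 : m (e 2) (e 2) = 0) :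
    HasN33Basis m := by
  by_cases h0 : m (e 0) (e 0) = 0
  · refine absurd (isDecomposable_of_forall_ne_sq_eq_zero hnat (i := 1) (j := 0) (k := 2)
      (by decide) (by decide) (by decide) fun t ht => ?_) hindec
    fin_cases t <;> simp_all
  by_cases h1 : m (e 1) (e 1) = 0
  · refine absurd (isDecomposable_of_forall_ne_sq_eq_zero hnat (i := 0) (j := 1) (k := 2)
      (by decide) (by decide) (by decide) fun t ht => ?_) hindec
    fin_cases t <;> simp_all
  have hsq (i : Fin 3) : m (e i) (e i) = e.repr (m (e i) (e i)) 2 • e 2 :=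
    e.ext_elem fun t => by
      fin_cases t <;> simp [repr_sq_eq_zero_of_sq_ne_zero hnat hnil hassoc i h0,
        repr_sq_eq_zero_of_sq_ne_zero hnat hnil hassoc i h1]
  exact hasN33Basis_of_sq_eq_smul hnat (fun h => h0 (by rw [hsq, h, zero_smul]))
    (fun h => h1 (by rw [hsq, h, zero_smul])) (hsq 0) (hsq 1) h2

end Dim3

end

theorem nil_assoc_indecomposable_dim3_classification_general
    (F : Type*) [Field F]
    (A : Type*) [AddCommGroup A] [Module F A]
    (m : A →ₗ[F] A →ₗ[F] A)
    (e : Module.Basis (Fin 3) F A)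
    (hnat : ∀ i j : Fin 3, i ≠ j → m (e i) (e j) = 0)
    (hnil : ∀ a : A, ∃ k : ℕ, ppow m a k = 0)
    (hassoc : ∀ x y z : A, m (m x y) z = m x (m y z))
    (hindec : ¬ ∃ I J : Submodule F A,
      (∀ x ∈ I, ∀ y : A, m x y ∈ I) ∧ (∀ x ∈ J, ∀ y : A, m x y ∈ J) ∧
      I ≠ ⊥ ∧ J ≠ ⊥ ∧ IsCompl I J) :
    ∃ v : Module.Basis (Fin 3) F A,
      (∀ i j : Fin 3, i ≠ j → m (v i) (v j) = 0) ∧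
      ∃ α : F, α ≠ 0 ∧
        m (v 0) (v 0) = v 2 ∧
        m (v 1) (v 1) = α • v 2 ∧
        m (v 2) (v 2) = 0 := by
  obtain ⟨k, hk⟩ := exists_sq_eq_zero hnat hnil hassoc
  set σ := Equiv.swap k 2
  have hnat' : IsNaturalBasis m (e.reindex σ) := fun i j hij => by
    simpa only [Module.Basis.reindex_apply] using hnat _ _ (σ.symm.injective.ne hij)
  exact hasN33Basis_of_sq_two_eq_zero hnat' hnil hassoc hindec (by simpa [σ] using hk)

/-- a 3-dimensional nil, associative, indecomposable evolution algebra over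
a field of characteristic ≠ 2 is isomorphic to `N_{3,3}(α)`:
`v₁² = v₃`, `v₂² = α v₃`, `v₃² = 0` with `α ≠ 0`. -/
theorem nil_assoc_indecomposable_dim3_classification
    (F : Type*) [Field F] (h2 : (2 : F) ≠ 0)
    (A : Type*) [AddCommGroup A] [Module F A]
    (m : A →ₗ[F] A →ₗ[F] A) (hcomm : ∀ x y : A, m x y = m y x)
    (e : Module.Basis (Fin 3) F A)
    (hnat : ∀ i j : Fin 3, i ≠ j → m (e i) (e j) = 0)
    (hnil : ∀ a : A, ∃ k : ℕ, ppow m a k = 0)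
    (hassoc : ∀ x y z : A, m (m x y) z = m x (m y z))
    (hindec : ¬ ∃ I J : Submodule F A,
      (∀ x ∈ I, ∀ y : A, m x y ∈ I) ∧ (∀ x ∈ J, ∀ y : A, m x y ∈ J) ∧
      I ≠ ⊥ ∧ J ≠ ⊥ ∧ IsCompl I J) :
    ∃ v : Module.Basis (Fin 3) F A,
      (∀ i j : Fin 3, i ≠ j → m (v i) (v j) = 0) ∧
      ∃ α : F, α ≠ 0 ∧
        m (v 0) (v 0) = v 2 ∧
        m (v 1) (v 1) = α • v 2 ∧
        m (v 2) (v 2) = 0 :=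
  nil_assoc_indecomposable_dim3_classification_general F A m e hnat hnil hassoc hindec
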